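/- Let σ_a* be an agent strategy on the knowledge-based game arena G with Val^μ(σ_a*) < ∞. Then σ_a* is a winning strategy, and for every environment strategy σ_e ∈ 𝔖_e the outcome play realizes a minimum-cost play to its endpoint: cost_G(π_{σ_a*,σ_e}) = SPcost(v0, last(π_{σ_a*,σ_e})). -/

import Mathlib

namespace RegretLTL

/-- A deterministic finite automaton over alphabet `2^AP`. -/
structure DFAut (Q AP : Type) where
  q0 : Q
  f : Q → Finset AP → Q
  QF : Set Q

/-- A partially-known weighted transition system. -/
structure PKWTS (X AP : Type) where
  x0 : X
  Δ : X → Finset (Finset X)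
  Δ_nonempty : ∀ x, (Δ x).Nonempty
  w : X → X → ℝ
  w_nonneg : ∀ x y, 0 ≤ w x y
  L : X → Finset AP
  x0_known : (Δ x0).card = 1

variable {X Q AP : Type} [DecidableEq X] [Fintype X] [Fintype Q] [Fintype AP]
  [Inhabited X] [Inhabited Q]

/-- The pattern recorded for `x` in a knowledge-set (junk value `∅` if absent). -/
def lookupO (K : List (X × Finset X)) (x : X) : Finset X :=
  ((K.find? (fun k => decide (k.1 = x))).map Prod.snd).getD ∅

/-- `x` has been explored in the knowledge-set `K`, i.e. `x ∈ X(K)`. -/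
def Explored (K : List (X × Finset X)) (x : X) : Prop := ∃ o, (x, o) ∈ K

/-- Knowledge-set update. -/
def kupdate (K : List (X × Finset X)) (κ : X × Finset X) : List (X × Finset X) :=
  if K.any (fun k => decide (k.1 = κ.1)) then K else K ++ [κ]

variable (M : PKWTS X AP) (D : DFAut Q AP) (K0 : List (X × Finset X))

/-- `K0` is the initial knowledge-set: it lists (in some fixed order) each known
state together with its unique successor pattern. -/
def IsInitK : Prop :=
  (K0.map Prod.fst).Nodup ∧ (∀ p ∈ K0, M.Δ p.1 = {p.2}) ∧
    ∀ x : X, (M.Δ x).card = 1 → ∃ o, (x, o) ∈ K0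

/-- A compatible environment `T ∈ 𝕋`, given by its transition function. -/
def CompatEnv := { δ : X → Finset X // ∀ x, δ x ∈ M.Δ x }

/-- A finite path of the environment with transition function `δ`, starting at `x0`. -/
def IsEnvPath (δ : X → Finset X) (ρ : List X) : Prop :=
  ρ ≠ [] ∧ ρ.head? = some M.x0 ∧ ρ.Chain' (fun a b => b ∈ δ a)

/-- Cost of a finite path. -/
def costP (ρ : List X) : ℝ := (List.zipWith M.w ρ ρ.tail).sum

/-- Run of the DFA on the labels of a sequence of states. -/
def frun (q : Q) (xs : List X) : Q := xs.foldl (fun q x => D.f q (M.L x)) q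

/-- The finite path `ρ = x0 x1 ⋯ xn` accomplishes the task:
`f(q0, L(x0)⋯L(x_{n-1})) ∈ QF`. -/
def Accomplishes (ρ : List X) : Prop :=
  ρ ≠ [] ∧ frun M D D.q0 ρ.dropLast ∈ D.QF

/-- A history of the PK-WTS. -/
def IsHistory (h : List (X × Finset X)) : Prop :=
  h ≠ [] ∧ (h.map Prod.fst).head? = some M.x0 ∧
  (∀ p ∈ h, p.2 ∈ M.Δ p.1) ∧
  h.Chain' (fun p p' => p'.1 ∈ p.2) ∧
  ∀ p ∈ h, ∀ p' ∈ h, p.1 = p'.1 → p.2 = p'.2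

/-- Validity of a strategy for the PK-WTS: it moves to a successor in the last
observed pattern, or stops. -/
def XiValid (ξ : List (X × Finset X) → Option X) : Prop :=
  ∀ h p x, IsHistory M h → h.getLast? = some p → ξ h = some x → x ∈ p.2

/-- The history induced from a path in a fixed environment. -/
def histOf (δ : X → Finset X) (ρ : List X) : List (X × Finset X) :=
  ρ.map (fun x => (x, δ x))

/-- `ρ` is the outcome path `ρ^T_ξ` of strategy `ξ` in environment `δ`. -/
def IsOutcomePath (ξ : List (X × Finset X) → Option X) (δ : X → Finset X)
    (ρ : List X) : Prop :=
  IsEnvPath M δ ρ ∧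
  (∀ i (h : i + 1 < ρ.length),
    ξ (histOf δ (ρ.take (i+1))) = some (ρ[i+1]'h)) ∧
  ξ (histOf δ ρ) = none

open Classical in
/-- The outcome path `ρ^T_ξ` (junk `[]` if it does not exist). -/
noncomputable def outcomePath (ξ : List (X × Finset X) → Option X)
    (T : CompatEnv M) : List X :=
  if h : ∃ ρ, IsOutcomePath M ξ T.1 ρ then h.choose else []

/-- `Stra_A(𝕋)`: strategies whose outcome path exists and accomplishes the task in
every compatible environment. -/
def StraA : Set (List (X × Finset X) → Option X) :=
  { ξ | XiValid M ξ ∧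
      ∀ T : CompatEnv M, ∃ ρ, IsOutcomePath M ξ T.1 ρ ∧ Accomplishes M D ρ }

/-- The regret of a strategy `ξ` in the partially-known environment `𝕋`. -/
noncomputable def regT (ξ : List (X × Finset X) → Option X) : ℝ :=
  sSup { r | ∃ T : CompatEnv M,
    costP M (outcomePath M ξ T) -
      sInf { c | ∃ ξ' ∈ StraA M D, costP M (outcomePath M ξ' T) = c } = r }

/-- Vertices of the knowledge-based game arena. -/
inductive Vtx (X Q : Type) where
  | ag (x : X) (q : Q) (K : List (X × Finset X))
  | env (x : X) (q : Q) (K : List (X × Finset X)) (xh : X)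

instance : Inhabited (Vtx X Q) := ⟨.ag default default []⟩

def IsAgV : Vtx X Q → Prop
  | .ag _ _ _ => True
  | _ => False

def IsEnvV : Vtx X Q → Prop
  | .env _ _ _ _ => True
  | _ => False

/-- Knowledge-set component of a vertex. -/
def Kof : Vtx X Q → List (X × Finset X)
  | .ag _ _ K => K
  | .env _ _ K _ => K

/-- The fourth (target-state) component of an environment vertex. -/
def tgtOf : Vtx X Q → Option X
  | .env _ _ _ xh => some xh
  | _ => none

/-- Edges of the knowledge-based game arena. -/
def Edge : Vtx X Q → Vtx X Q → Prop
  | .ag x q K, .env x' q' K' xh =>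
      x' = x ∧ q' = q ∧ K' = K ∧ Explored K x ∧ xh ∈ lookupO K x
  | .env xe qe Ke xh, .ag xa qa Ka =>
      xa = xh ∧ qa = D.f qe (M.L xe) ∧ ∃ o ∈ M.Δ xa, Ka = kupdate Ke (xa, o)
  | _, _ => False

/-- Initial vertex of the arena. -/
def v0 : Vtx X Q := .ag M.x0 D.q0 K0

/-- Weight function of the arena. -/
def wG : Vtx X Q → Vtx X Q → ℝ
  | .env xe _ _ _, .ag xa _ _ => M.w xe xa
  | _, _ => 0

/-- A play: a finite directed path in the arena starting at `v0`. -/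
def IsPlay (π : List (Vtx X Q)) : Prop :=
  π.head? = some (v0 M D K0) ∧ π.Chain' (Edge M D)

/-- Cost of a play. -/
def costG (π : List (Vtx X Q)) : ℝ := (List.zipWith (wG M) π π.tail).sum

/-- Accepting (final) vertices `V_F`. -/
def InVF : Vtx X Q → Prop
  | Vtx.ag _ q _ => q ∈ D.QF
  | _ => False

/-- Validity of an agent strategy: along plays ending at an agent vertex, it
either stops or moves along an edge of the arena. -/
def AValid (σa : List (Vtx X Q) → Option (Vtx X Q)) : Prop :=
  ∀ π u v, IsPlay M D K0 π → π.getLast? = some u → IsAgV u → σa π = some v →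
    Edge M D u v

/-- Validity of a (positional) environment strategy: it moves along edges of the
arena, and it reveals the same successor pattern whenever the same unexplored
state is entered. This defines membership in `𝔖_e`. -/
def EValid (σe : Vtx X Q → Vtx X Q) : Prop :=
  (∀ v, IsEnvV v → Edge M D v (σe v)) ∧
  (∀ (x : X) (q : Q) (K : List (X × Finset X)) (x' : X) (q' : Q)
      (K' : List (X × Finset X)) (xh : X),
    ¬ Explored K xh → ¬ Explored K' xh →
    lookupO (Kof (σe (.env x q K xh))) xh = lookupO (Kof (σe (.env x' q' K' xh))) xh)

/-- The set `𝔖_e` of environment strategies. -/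
def SE : Set (Vtx X Q → Vtx X Q) := { σe | EValid M D σe }

/-- `π` is the outcome play `π_{σa,σe}`. -/
def IsOutcome (σa : List (Vtx X Q) → Option (Vtx X Q)) (σe : Vtx X Q → Vtx X Q)
    (π : List (Vtx X Q)) : Prop :=
  IsPlay M D K0 π ∧
  (∀ i (h : i + 1 < π.length),
    (IsAgV (π[i]'(Nat.lt_of_succ_lt h)) → σa (π.take (i+1)) = some (π[i+1]'h)) ∧
    (IsEnvV (π[i]'(Nat.lt_of_succ_lt h)) → σe (π[i]'(Nat.lt_of_succ_lt h)) = π[i+1]'h)) ∧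
  IsAgV π.getLast! ∧ σa π = none

open Classical in
/-- The outcome play `π_{σa,σe}` (junk `[]` if it does not exist). -/
noncomputable def outcome (σa : List (Vtx X Q) → Option (Vtx X Q))
    (σe : Vtx X Q → Vtx X Q) : List (Vtx X Q) :=
  if h : ∃ π, IsOutcome M D K0 σa σe π then h.choose else []

/-- The set `𝔖_a` of winning agent strategies. -/
def SA : Set (List (Vtx X Q) → Option (Vtx X Q)) :=
  { σa | AValid M D K0 σa ∧
      ∀ σe ∈ SE M D, ∃ π, IsOutcome M D K0 σa σe π ∧ InVF D π.getLast! }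

/-- `min_{σa' ∈ 𝔖_a} cost_G(π_{σa',σe})`. -/
noncomputable def bestCost (σe : Vtx X Q → Vtx X Q) : ℝ :=
  sInf { c | ∃ σa ∈ SA M D K0, costG M (outcome M D K0 σa σe) = c }

/-- The regret `reg_G^{σe}(σa)` of `σa` against `σe`. -/
noncomputable def regAgainst (σa : List (Vtx X Q) → Option (Vtx X Q))
    (σe : Vtx X Q → Vtx X Q) : ℝ :=
  costG M (outcome M D K0 σa σe) - bestCost M D K0 σe

/-- The regret `reg_G(σa)`. -/
noncomputable def regG (σa : List (Vtx X Q) → Option (Vtx X Q)) : ℝ :=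
  sSup { r | ∃ σe ∈ SE M D, regAgainst M D K0 σa σe = r }

/-- Positional agent strategies. -/
def PositionalA (σa : List (Vtx X Q) → Option (Vtx X Q)) : Prop :=
  ∀ π π' : List (Vtx X Q), π.getLast? = π'.getLast? → σa π = σa π'

/-- `T ∈ 𝕋_K`. -/
def InTK (K : List (X × Finset X)) (T : CompatEnv M) : Prop :=
  ∀ p ∈ K, T.1 p.1 = p.2

/-- Best response `br(K)`. -/
noncomputable def br (K : List (X × Finset X)) : ℝ :=
  sInf { c | ∃ T : CompatEnv M, InTK M K T ∧
    ∃ ρ, IsEnvPath M T.1 ρ ∧ Accomplishes M D ρ ∧ costP M ρ = c }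

/-- Minimum cost of a play from `v0` to `v`. -/
noncomputable def SPcost (v : Vtx X Q) : ℝ :=
  sInf { c | ∃ π, IsPlay M D K0 π ∧ π.getLast? = some v ∧ costG M π = c }

/-- The edge `(u,v)` occurs on the play `π`. -/
def EdgeOn (u v : Vtx X Q) (π : List (Vtx X Q)) : Prop := (u, v) ∈ π.zip π.tail

/-- `(u,v) ∈ E_SP`: `(u,v)` lies on a minimum-cost play from `v0` to `V_F`. -/
def inESP (u v : Vtx X Q) : Prop :=
  ∃ π vf, IsPlay M D K0 π ∧ π.getLast? = some vf ∧ InVF D vf ∧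
    costG M π = SPcost M D K0 vf ∧ EdgeOn u v π

open Classical in
/-- The modified weight function `μ`, with values in `EReal`. -/
noncomputable def mu (u v : Vtx X Q) : EReal :=
  if IsEnvV u ∧ IsAgV v then
    (if inESP M D K0 u v then
      (if InVF D v then (((SPcost M D K0 v - br M D (Kof v) : ℝ)) : EReal) else 0)
     else ⊤)
  else 0

/-- Cost of a play with respect to `μ`. -/
noncomputable def costMu (π : List (Vtx X Q)) : EReal :=
  (List.zipWith (mu M D K0) π π.tail).sum

open Classical in
/-- `Val^μ(σa)`. -/
noncomputable def Valmu (σa : List (Vtx X Q) → Option (Vtx X Q)) : EReal :=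
  if AValid M D K0 σa ∧
     (∀ σe ∈ SE M D, ∃ π, IsOutcome M D K0 σa σe π ∧ InVF D π.getLast!)
  then sSup { c : EReal | ∃ σe ∈ SE M D, costMu M D K0 (outcome M D K0 σa σe) = c }
  else ⊤

/-- The environment strategy `σ_e^T` induced by a compatible environment `T`. -/
def envOf (T : CompatEnv M) : Vtx X Q → Vtx X Q
  | .env x q K xh => .ag xh (D.f q (M.L x)) (kupdate K (xh, T.1 xh))
  | v => v

/-- Best responses are achievable: for every compatible `T`, the best cost against
`σ_e^T` in the arena equals the minimum cost of a path of `T` accomplishing the task. -/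
def BRAchievable : Prop :=
  ∀ T : CompatEnv M,
    bestCost M D K0 (envOf M D T) =
      sInf { c | ∃ ρ, IsEnvPath M T.1 ρ ∧ Accomplishes M D ρ ∧ costP M ρ = c }

/-- The sequence of `X`-components of the agent vertices of a play. -/
def agentStates (π : List (Vtx X Q)) : List X :=
  π.filterMap (fun v => match v with | .ag x _ _ => some x | _ => none)

/-- The history induced by a complete play. -/
def inducedHist (π : List (Vtx X Q)) : List (X × Finset X) :=
  π.filterMap (fun v => match v with | .ag x _ K => some (x, lookupO K x) | _ => none)

/-- A branching environment vertex: at least two outgoing edges. -/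
def Branching (v : Vtx X Q) : Prop :=
  IsEnvV v ∧ ∃ u1 u2, u1 ≠ u2 ∧ Edge M D v u1 ∧ Edge M D v u2

open Classical in
/-- The sublist of branching environment vertices of a play, in order. -/
noncomputable def branchList (π : List (Vtx X Q)) : List (Vtx X Q) :=
  π.filter (fun v => decide (Branching M D v))


section AuxLemmas

lemma getLast!_of_getLast? {α : Type*} [Inhabited α] {l : List α} {a : α}
    (h : l.getLast? = some a) : l.getLast! = a := by
  cases l with
  | nil => simp at h
  | cons x xs =>
    rw [List.getLast?_eq_getLast (by simp)] at h
    simpa [List.getLast!] using Option.some_injective _ h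

lemma ereal_sum_ne_bot : ∀ {l : List EReal}, (∀ x ∈ l, x ≠ ⊥) → l.sum ≠ ⊥
  | [], _ => by simp
  | a :: l, h => by
    simp only [List.sum_cons]
    rw [Ne, EReal.add_eq_bot_iff]
    push_neg
    exact ⟨h a (by simp), ereal_sum_ne_bot (fun x hx => h x (by simp [hx]))⟩

lemma ereal_sum_eq_top : ∀ {l : List EReal}, (∀ x ∈ l, x ≠ ⊥) → ⊤ ∈ l → l.sum = ⊤
  | a :: l, hb, ht => by
    simp only [List.sum_cons]
    rcases List.mem_cons.mp ht with h | h
    · rw [← h] at hb ⊢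
      exact EReal.top_add_of_ne_bot (ereal_sum_ne_bot (fun x hx => hb x (by simp [hx])))
    · rw [ereal_sum_eq_top (fun x hx => hb x (by simp [hx])) h]
      exact EReal.add_top_of_ne_bot (hb a (by simp))

lemma head?_append_cons {α : Type*} (m : List α) (a : α) (t : List α) :
    (m ++ a :: t).head? = (m ++ [a]).head? := by
  cases m <;> simp

lemma chain'_replace_tail {α : Type*} {R : α → α → Prop} {m : List α} {a : α} {t : List α}
    (h1 : List.Chain' R (m ++ [a])) (h2 : List.Chain' R (a :: t)) :
    List.Chain' R (m ++ a :: t) := by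
  have h1' := List.isChain_append.mp h1
  refine List.isChain_append.mpr ⟨h1'.1, h2, ?_⟩
  intro x hx y hy
  simp only [List.head?_cons, Option.mem_def, Option.some.injEq] at hy
  subst hy
  exact h1'.2.2 x hx a (by simp)

variable {X Q AP : Type} [DecidableEq X] [Fintype X] [Fintype Q] [Fintype AP]
  [Inhabited X] [Inhabited Q]
variable (M : PKWTS X AP) (D : DFAut Q AP) (K0 : List (X × Finset X))

lemma wG_nonneg (u v : Vtx X Q) : 0 ≤ wG M u v := by
  cases u <;> cases v <;> first | exact le_refl 0 | exact M.w_nonneg _ _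

lemma zip_sum_nonneg : ∀ (l l' : List (Vtx X Q)), 0 ≤ (List.zipWith (wG M) l l').sum
  | [], _ => by simp
  | _ :: _, [] => by simp
  | a :: l, b :: l' => by
    simp only [List.zipWith_cons_cons, List.sum_cons]
    exact add_nonneg (wG_nonneg M a b) (zip_sum_nonneg l l')

lemma costG_nonneg (π : List (Vtx X Q)) : 0 ≤ costG M π := zip_sum_nonneg M _ _

lemma costG_single (a : Vtx X Q) : costG M [a] = 0 := by simp [costG]

lemma costG_cons (a b : Vtx X Q) (l : List (Vtx X Q)) :
    costG M (a :: b :: l) = wG M a b + costG M (b :: l) := by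
  simp [costG]

lemma costG_split : ∀ (l1 : List (Vtx X Q)) (a : Vtx X Q) (l2 : List (Vtx X Q)),
    costG M (l1 ++ a :: l2) = costG M (l1 ++ [a]) + costG M (a :: l2)
  | [], a, l2 => by simp [costG_single]
  | [x], a, l2 => by
    simp only [List.cons_append, List.nil_append, costG_cons, costG_single]
    ring
  | x :: y :: l1, a, l2 => by
    have ih := costG_split (y :: l1) a l2
    simp only [List.cons_append] at ih ⊢
    rw [costG_cons, costG_cons, ih]
    ring

lemma edge_out_ag {x : X} {q : Q} {K : List (X × Finset X)} {v : Vtx X Q}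
    (h : Edge M D (.ag x q K) v) : ∃ xh, v = .env x q K xh := by
  cases v with
  | ag _ _ _ => exact absurd h (by simp [Edge])
  | env x' q' K' xh =>
    obtain ⟨h1, h2, h3, _⟩ := h
    exact ⟨xh, by rw [h1, h2, h3]⟩

lemma edge_out_env {xe : X} {qe : Q} {Ke : List (X × Finset X)} {xh : X} {v : Vtx X Q}
    (h : Edge M D (.env xe qe Ke xh) v) : IsAgV v := by
  cases v with
  | ag _ _ _ => trivial
  | env _ _ _ _ => exact absurd h (by simp [Edge])

lemma edge_into_env {u : Vtx X Q} {x : X} {q : Q} {K : List (X × Finset X)} {xh : X}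
    (h : Edge M D u (.env x q K xh)) : u = .ag x q K := by
  cases u with
  | ag x1 q1 K1 =>
    obtain ⟨h1, h2, h3, _⟩ := h
    rw [h1, h2, h3]
  | env _ _ _ _ => exact absurd h (by simp [Edge])

lemma bddBelow_Scost (v : Vtx X Q) :
    BddBelow { c | ∃ π, IsPlay M D K0 π ∧ π.getLast? = some v ∧ costG M π = c } := by
  refine ⟨0, fun c hc => ?_⟩
  obtain ⟨π, _, _, hc⟩ := hc
  exact hc ▸ costG_nonneg M π

lemma SPcost_le {π : List (Vtx X Q)} {v : Vtx X Q}
    (hπ : IsPlay M D K0 π) (hlast : π.getLast? = some v) :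
    SPcost M D K0 v ≤ costG M π :=
  csInf_le (bddBelow_Scost M D K0 v) ⟨π, hπ, hlast, rfl⟩

lemma isPlay_v0 : IsPlay M D K0 [v0 M D K0] := ⟨rfl, List.isChain_singleton _⟩

lemma SPcost_v0 : SPcost M D K0 (v0 M D K0) = 0 := by
  refine le_antisymm ?_ ?_
  · have := SPcost_le M D K0 (π := [v0 M D K0]) (v := v0 M D K0) (isPlay_v0 M D K0) (by simp)
    rwa [costG_single] at this
  · refine le_csInf ⟨0, [v0 M D K0], isPlay_v0 M D K0, by simp, costG_single M _⟩ ?_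
    rintro c ⟨π, _, _, hc⟩
    exact hc ▸ costG_nonneg M π

/-- A prefix (up to and including a pivot) of a minimum-cost play is minimum-cost. -/
lemma prefix_min {l1 l2 : List (Vtx X Q)} {u vf : Vtx X Q}
    (hπ : IsPlay M D K0 (l1 ++ u :: l2))
    (hlast : (l1 ++ u :: l2).getLast? = some vf)
    (hmin : costG M (l1 ++ u :: l2) = SPcost M D K0 vf) :
    costG M (l1 ++ [u]) = SPcost M D K0 u := by
  obtain ⟨hhead, hchain⟩ := hπ
  have hchains := List.isChain_append.mp hchain
  have hplay1 : IsPlay M D K0 (l1 ++ [u]) := by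
    constructor
    · rw [← head?_append_cons l1 u l2]; exact hhead
    · refine List.isChain_append.mpr ⟨hchains.1, List.isChain_singleton _, ?_⟩
      intro a ha b hb
      simp only [List.head?_cons, Option.mem_def, Option.some.injEq] at hb
      subst hb
      exact hchains.2.2 a ha u (by simp)
  have hlast1 : (l1 ++ [u]).getLast? = some u := List.getLast?_concat
  refine le_antisymm ?_ (SPcost_le M D K0 hplay1 hlast1)
  by_contra hltc
  push_neg at hltc
  have hSne : Set.Nonempty
      { c | ∃ π, IsPlay M D K0 π ∧ π.getLast? = some u ∧ costG M π = c } :=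
    ⟨costG M (l1 ++ [u]), l1 ++ [u], hplay1, hlast1, rfl⟩
  have hlt : sInf { c | ∃ π, IsPlay M D K0 π ∧ π.getLast? = some u ∧ costG M π = c } <
      costG M (l1 ++ [u]) := hltc
  obtain ⟨c, ⟨P', hP', hP'last, hP'cost⟩, hclt⟩ := exists_lt_of_csInf_lt hSne hlt
  cases l2 with
  | nil =>
    rw [List.getLast?_concat] at hlast
    obtain rfl : u = vf := by injection hlast
    rw [hmin] at hltc
    exact lt_irrefl _ hltc
  | cons b l2' =>
    have hP'ne : P' ≠ [] := by
      intro h; rw [h] at hP'last; simp at hP'last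
    have hglu : P'.getLast hP'ne = u := by
      rw [List.getLast?_eq_getLast hP'ne, Option.some.injEq] at hP'last
      exact hP'last
    have hP'decomp : P'.dropLast ++ [u] = P' := by
      rw [← hglu]; exact List.dropLast_append_getLast hP'ne
    set m := P'.dropLast with hm
    set π' := m ++ u :: b :: l2' with hπ'
    have hP'play := hP'
    obtain ⟨hP'head, hP'chain⟩ := hP'
    have hplay' : IsPlay M D K0 π' := by
      constructor
      · rw [hπ', head?_append_cons m u (b :: l2'), hP'decomp]
        exact hP'head
      · exact chain'_replace_tail (hP'decomp ▸ hP'chain) hchains.2.1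
    have hlast' : π'.getLast? = some vf := by
      rw [hπ', List.getLast?_append_of_ne_nil _ (by simp)]
      rw [List.getLast?_append_of_ne_nil _ (by simp)] at hlast
      exact hlast
    have hcost' : costG M π' = c + costG M (u :: b :: l2') := by
      rw [hπ', costG_split, hP'decomp, hP'cost]
    have hcostπ : costG M (l1 ++ u :: b :: l2') =
        costG M (l1 ++ [u]) + costG M (u :: b :: l2') := costG_split M l1 u (b :: l2')
    have h1 : SPcost M D K0 vf ≤ costG M π' := SPcost_le M D K0 hplay' hlast'
    rw [hcost'] at h1
    rw [hcostπ] at hmin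
    linarith

/-- Edges in `E_SP` are tight. -/
lemma edge_tight {u v : Vtx X Q} (h : inESP M D K0 u v) :
    SPcost M D K0 v = SPcost M D K0 u + wG M u v := by
  obtain ⟨π, vf, hplay, hlast, _, hcost, hedge⟩ := h
  obtain ⟨i, hi, hget⟩ := List.getElem_of_mem hedge
  have hizip : i < π.length ∧ i < π.tail.length := by
    have := hi
    rw [List.length_zip] at this
    exact ⟨lt_of_lt_of_le this inf_le_left, lt_of_lt_of_le this inf_le_right⟩
  have hi1 : i + 1 < π.length := by
    have := hizip.2
    rw [List.length_tail] at this
    omega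
  have hu : π[i]'(by omega) = u := by
    rw [List.getElem_zip] at hget
    exact congrArg Prod.fst hget
  have hv : π[i+1]'hi1 = v := by
    rw [List.getElem_zip] at hget
    have := congrArg Prod.snd hget
    rwa [List.getElem_tail] at this
  have hdecomp : π = π.take i ++ u :: v :: π.drop (i+2) := by
    conv_lhs => rw [← List.take_append_drop i π]
    congr 1
    rw [List.drop_eq_getElem_cons (by omega : i < π.length), hu]
    congr 1
    rw [List.drop_eq_getElem_cons (by omega : i + 1 < π.length), hv]
  set l1 := π.take i with hl1
  set l2 := π.drop (i+2) with hl2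
  rw [hdecomp] at hplay hlast hcost
  have e1 : costG M (l1 ++ [u]) = SPcost M D K0 u :=
    prefix_min M D K0 hplay hlast hcost
  have hdecomp2 : l1 ++ u :: v :: l2 = (l1 ++ [u]) ++ v :: l2 := by simp
  rw [hdecomp2] at hplay hlast hcost
  have e2 : costG M ((l1 ++ [u]) ++ [v]) = SPcost M D K0 v :=
    prefix_min M D K0 hplay hlast hcost
  have e3 : costG M ((l1 ++ [u]) ++ [v]) = costG M (l1 ++ [u]) + wG M u v := by
    have : (l1 ++ [u]) ++ [v] = l1 ++ u :: [v] := by simp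
    rw [this, costG_split, costG_cons, costG_single]
    ring
  rw [e3, e1] at e2
  exact e2.symm

/-- A play all of whose environment-to-agent edges are in `E_SP` is a minimum-cost
play to its endpoint. -/
lemma tight_play_cost : ∀ (π : List (Vtx X Q)), IsPlay M D K0 π →
    (∀ i (h : i + 1 < π.length), IsEnvV (π[i]'(Nat.lt_of_succ_lt h)) →
      inESP M D K0 (π[i]'(Nat.lt_of_succ_lt h)) (π[i+1]'h)) →
    ∀ v : Vtx X Q, π.getLast? = some v → costG M π = SPcost M D K0 v := by
  intro π
  induction π using List.reverseRecOn with
  | nil => intro hplay _ v _; exact absurd hplay.1 (by simp)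
  | append_singleton l b ih =>
    intro hplay htight a hlast
    rw [List.getLast?_concat] at hlast
    have hav : b = a := by injection hlast
    subst hav
    cases l with
    | nil =>
      obtain rfl : b = v0 M D K0 := by
        have := hplay.1; simpa using this
      rw [List.nil_append, costG_single, SPcost_v0]
    | cons x l' =>
      set l := x :: l' with hl
      have hlne : l ≠ [] := by simp [hl]
      set u := l.getLast hlne with hu
      have hldecomp : l.dropLast ++ [u] = l := List.dropLast_append_getLast hlne
      have hchains := List.isChain_append.mp hplay.2
      have hplayl : IsPlay M D K0 l := by
        constructor
        · have := hplay.1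
          rwa [List.head?_append_of_ne_nil _ hlne] at this
        · exact hchains.1
      have hllast : l.getLast? = some u := List.getLast?_eq_getLast hlne
      have hedge : Edge M D u b := by
        refine hchains.2.2 u ?_ b (by simp)
        exact hllast
      have htightl : ∀ i (h : i + 1 < l.length), IsEnvV (l[i]'(Nat.lt_of_succ_lt h)) →
          inESP M D K0 (l[i]'(Nat.lt_of_succ_lt h)) (l[i+1]'h) := by
        intro i h henv
        have h1 : i + 1 < (l ++ [b]).length := by simp; omega
        have e0 : (l ++ [b])[i]'(Nat.lt_of_succ_lt h1) = l[i]'(Nat.lt_of_succ_lt h) :=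
          List.getElem_append_left _
        have e1 : (l ++ [b])[i+1]'h1 = l[i+1]'h := List.getElem_append_left _
        have := htight i h1 (by rw [e0]; exact henv)
        rwa [e0, e1] at this
      have ihl : costG M l = SPcost M D K0 u := ih hplayl htightl u hllast
      have hcostla : costG M (l ++ [b]) = costG M l + wG M u b := by
        conv_lhs => rw [← hldecomp]
        rw [List.append_assoc, List.singleton_append, costG_split, hldecomp,
          costG_cons, costG_single]
        ring
      rcases hu' : u with ⟨x1, q1, K1⟩ | ⟨xe, qe, Ke, xh0⟩
      · rw [hu'] at hedge
        obtain ⟨xh, rfl⟩ := edge_out_ag M D hedge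
        have hw0 : wG M u (Vtx.env x1 q1 K1 xh) = 0 := by rw [hu']; rfl
        have hle : SPcost M D K0 (Vtx.env x1 q1 K1 xh) ≤ costG M (l ++ [Vtx.env x1 q1 K1 xh]) :=
          SPcost_le M D K0 hplay (List.getLast?_concat)
        have hge : SPcost M D K0 u ≤ SPcost M D K0 (Vtx.env x1 q1 K1 xh) := by
          refine le_csInf ⟨costG M (l ++ [Vtx.env x1 q1 K1 xh]), _, hplay,
            List.getLast?_concat, rfl⟩ ?_
          rintro c ⟨P', hP', hP'last, rfl⟩
          have hP'ne : P' ≠ [] := by intro h; rw [h] at hP'last; simp at hP'last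
          have hP'gl : P'.getLast hP'ne = Vtx.env x1 q1 K1 xh := by
            rw [List.getLast?_eq_getLast hP'ne, Option.some.injEq] at hP'last
            exact hP'last
          have hP'decomp : P'.dropLast ++ [Vtx.env x1 q1 K1 xh] = P' := by
            rw [← hP'gl]; exact List.dropLast_append_getLast hP'ne
          have hmne : P'.dropLast ≠ [] := by
            intro h
            rw [h, List.nil_append] at hP'decomp
            have := hP'.1
            rw [← hP'decomp] at this
            simp only [List.head?_cons, Option.some.injEq] at this
            exact absurd this (by simp [v0])
          have hmgl : P'.dropLast.getLast hmne = Vtx.ag x1 q1 K1 := by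
            have hch := hP'.2
            rw [← hP'decomp] at hch
            have hchs := List.isChain_append.mp hch
            have := hchs.2.2 (P'.dropLast.getLast hmne)
              (List.getLast?_eq_getLast hmne) (Vtx.env x1 q1 K1 xh) (by simp)
            exact edge_into_env M D this
          have hmplay : IsPlay M D K0 P'.dropLast := by
            constructor
            · have := hP'.1
              rw [← hP'decomp, List.head?_append_of_ne_nil _ hmne] at this
              exact this
            · have hch := hP'.2
              rw [← hP'decomp] at hch
              exact (List.isChain_append.mp hch).1
          have hcosteq : costG M P' = costG M P'.dropLast := by
            conv_lhs => rw [← hP'decomp]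
            have hmd : P'.dropLast.dropLast ++ [Vtx.ag x1 q1 K1] = P'.dropLast := by
              rw [← hmgl]; exact List.dropLast_append_getLast hmne
            conv_lhs => rw [← hmd]
            rw [List.append_assoc, List.singleton_append, costG_split, hmd,
              costG_cons, costG_single]
            simp [wG]
          have : SPcost M D K0 u ≤ costG M P'.dropLast := by
            refine SPcost_le M D K0 hmplay ?_
            rw [List.getLast?_eq_getLast hmne, hmgl, hu']
          rw [hcosteq]
          exact this
        have heq : SPcost M D K0 (Vtx.env x1 q1 K1 xh) = SPcost M D K0 u := by
          refine le_antisymm ?_ hge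
          calc SPcost M D K0 (Vtx.env x1 q1 K1 xh)
              ≤ costG M (l ++ [Vtx.env x1 q1 K1 xh]) := hle
            _ = costG M l + wG M u (Vtx.env x1 q1 K1 xh) := hcostla
            _ = SPcost M D K0 u := by rw [hw0, ihl]; ring
        rw [hcostla, hw0, ihl, heq]
        ring
      · have henv : IsEnvV u := by rw [hu']; trivial
        have hilt : l.length - 1 + 1 < (l ++ [b]).length := by
          simp [hl]
        have hgetu : (l ++ [b])[l.length - 1]'(Nat.lt_of_succ_lt hilt) = u := by
          rw [List.getElem_append_left (by simp [hl] : l.length - 1 < l.length)]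
          rw [hu, List.getLast_eq_getElem]
        have hgetv : (l ++ [b])[l.length - 1 + 1]'hilt = b := by
          apply List.getElem_concat_length
          simp [hl]
        have hesp := htight (l.length - 1) hilt (by rw [hgetu]; exact henv)
        rw [hgetu, hgetv] at hesp
        rw [hcostla, ihl, edge_tight M D K0 hesp]

end AuxLemmas

section Aux2
variable {X Q AP : Type} [DecidableEq X] [Fintype X] [Fintype Q] [Fintype AP]
  [Inhabited X] [Inhabited Q]
variable (M : PKWTS X AP) (D : DFAut Q AP) (K0 : List (X × Finset X))

lemma mu_ne_bot (u v : Vtx X Q) : mu M D K0 u v ≠ ⊥ := by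
  unfold mu
  split_ifs <;> simp [← EReal.coe_sub]

lemma tight_of_costMu_lt_top {π : List (Vtx X Q)} (hplay : IsPlay M D K0 π)
    (hlt : costMu M D K0 π < ⊤) :
    ∀ i (h : i + 1 < π.length), IsEnvV (π[i]'(Nat.lt_of_succ_lt h)) →
      inESP M D K0 (π[i]'(Nat.lt_of_succ_lt h)) (π[i+1]'h) := by
  intro i h henv
  by_contra hn
  have hedge : Edge M D (π[i]'(Nat.lt_of_succ_lt h)) (π[i+1]'h) := by
    have := List.isChain_iff_getElem.mp hplay.2 i (by omega)
    simpa using this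
  have hag : IsAgV (π[i+1]'h) := by
    rcases hpi : (π[i]'(Nat.lt_of_succ_lt h)) with _ | ⟨xe, qe, Ke, xh⟩
    · rw [hpi] at henv; exact absurd henv (by simp [IsEnvV])
    · rw [hpi] at hedge; exact edge_out_env M D hedge
  have hmu : mu M D K0 (π[i]'(Nat.lt_of_succ_lt h)) (π[i+1]'h) = ⊤ := by
    unfold mu
    rw [if_pos ⟨henv, hag⟩, if_neg hn]
  have hilen : i < (List.zipWith (mu M D K0) π π.tail).length := by
    rw [List.length_zipWith, List.length_tail]
    omega
  have hgetzip : (List.zipWith (mu M D K0) π π.tail)[i]'hilen = ⊤ := by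
    rw [List.getElem_zipWith, List.getElem_tail]
    exact hmu
  have htop : (⊤ : EReal) ∈ List.zipWith (mu M D K0) π π.tail :=
    hgetzip ▸ List.getElem_mem hilen
  have hsum : costMu M D K0 π = ⊤ := by
    unfold costMu
    refine ereal_sum_eq_top ?_ htop
    intro x hx
    obtain ⟨j, hj, rfl⟩ := List.getElem_of_mem hx
    rw [List.getElem_zipWith]
    exact mu_ne_bot M D K0 _ _
  rw [hsum] at hlt
  exact absurd hlt (lt_irrefl _)

end Aux2

/-- an agent strategy of finite `Val^μ` is winning, and each of its
outcome plays is a minimum-cost play to its endpoint. -/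
theorem finite_value_implies_winning_and_shortest
    (hinit : IsInitK M K0)
    (σastar : List (Vtx X Q) → Option (Vtx X Q))
    (hA : AValid M D K0 σastar)
    (hfin : Valmu M D K0 σastar < ⊤) :
    σastar ∈ SA M D K0 ∧
    ∀ σe ∈ SE M D,
      costG M (outcome M D K0 σastar σe) =
        SPcost M D K0 ((outcome M D K0 σastar σe).getLast!) := by
  have hcond : AValid M D K0 σastar ∧
      ∀ σe ∈ SE M D, ∃ π, IsOutcome M D K0 σastar σe π ∧ InVF D π.getLast! := by
    by_contra hc
    unfold Valmu at hfin
    rw [if_neg hc] at hfin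
    exact absurd hfin (lt_irrefl _)
  refine ⟨hcond, ?_⟩
  intro σe hσe
  obtain ⟨π₀, hout₀, _⟩ := hcond.2 σe hσe
  have hex : ∃ π, IsOutcome M D K0 σastar σe π := ⟨π₀, hout₀⟩
  have houtc : IsOutcome M D K0 σastar σe (outcome M D K0 σastar σe) := by
    unfold outcome
    rw [dif_pos hex]
    exact hex.choose_spec
  have hplay : IsPlay M D K0 (outcome M D K0 σastar σe) := houtc.1
  have hlt : costMu M D K0 (outcome M D K0 σastar σe) < ⊤ := by
    have hmem : costMu M D K0 (outcome M D K0 σastar σe) ∈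
        { c : EReal | ∃ σe' ∈ SE M D, costMu M D K0 (outcome M D K0 σastar σe') = c } :=
      ⟨σe, hσe, rfl⟩
    have hle := le_sSup hmem
    have hval : Valmu M D K0 σastar =
        sSup { c : EReal | ∃ σe' ∈ SE M D, costMu M D K0 (outcome M D K0 σastar σe') = c } := by
      unfold Valmu
      rw [if_pos hcond]
    exact lt_of_le_of_lt (hle.trans_eq hval.symm) hfin
  have htight := tight_of_costMu_lt_top M D K0 hplay hlt
  have hne : outcome M D K0 σastar σe ≠ [] := by
    intro h
    rw [h] at hplay
    exact absurd hplay.1 (by simp)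
  have hlast : (outcome M D K0 σastar σe).getLast? =
      some ((outcome M D K0 σastar σe).getLast hne) := List.getLast?_eq_getLast hne
  have hc := tight_play_cost M D K0 _ hplay htight _ hlast
  rw [getLast!_of_getLast? hlast]
  exact hc


end RegretLTL
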